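/- arXiv:2505.14249 — 2 statements merged into one kernel-verified Lean document; each statement's English description precedes it below -/
import Mathlib

section
/- Let R be a finite ring with identity. For every vertex x = (e, u) of the graph Cl₂(R), the degree of x equals |Id(R)| + O_e·(|U(R)| − 1) − 2 if u² = 1, and |Id(R)| + O_e·(|U(R)| − 1) − 1 if u² ≠ 1, where O_e = |{f ∈ Id(R) \ {0} : ef = fe = 0}|. -/
/-- The clean graph `Cl₂(R)`: vertices are pairs `(e, u)` with `e` a nonzero
idempotent and `u` a unit; distinct vertices `(e,u)`, `(f,v)` are adjacent iff
`ef = fe = 0` or `uv = vu = 1`. -/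
def Cl2 (R : Type*) [Ring R] :
    SimpleGraph ({e : R // e ^ 2 = e ∧ e ≠ 0} × Rˣ) where
  Adj x y := x ≠ y ∧
    ((x.1.1 * y.1.1 = 0 ∧ y.1.1 * x.1.1 = 0) ∨ (x.2 * y.2 = 1 ∧ y.2 * x.2 = 1))
  symm := by
    constructor
    rintro x y ⟨hne, h⟩
    exact ⟨hne.symm, by tauto⟩
  loopless := by constructor; rintro x ⟨hne, -⟩; exact hne rfl

/-! The neighbourhood of `x = (e, u)` is `(O_e × U(R) ∪ S × {u⁻¹}) \ {x}`, where `S` is the set of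
nonzero idempotents and `O_e ⊆ S` those orthogonal to `e`. The two pieces meet in `O_e × {u⁻¹}`,
and as `e ∉ O_e`, the vertex `x` lies in their union exactly when `u = u⁻¹`, i.e. `u² = 1`.
Inclusion–exclusion and `|S| = |Id(R)| - 1` give the formula. -/

open Set

theorem Set.ncard_prod_univ_union_univ_prod_singleton_add {α β : Type*} [Finite α] [Finite β]
    (A : Set α) (b : β) :
    (A ×ˢ univ ∪ univ ×ˢ {b}).ncard + A.ncard = A.ncard * Nat.card β + Nat.card α := by
  have hinter : A ×ˢ univ ∩ univ ×ˢ {b} = A ×ˢ ({b} : Set β) := by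
    rw [prod_inter_prod, inter_univ, univ_inter]
  have := ncard_union_add_ncard_inter (A ×ˢ univ) (univ ×ˢ {b})
  rwa [hinter, ncard_prod, ncard_prod, ncard_prod, ncard_univ, ncard_univ, ncard_singleton,
    mul_one, mul_one] at this

theorem Nat.card_subtype_and_ne_zero_add_one {α : Type*} [Zero α] [Finite α] {p : α → Prop}
    (h0 : p 0) : Nat.card {a // p a ∧ a ≠ 0} + 1 = Nat.card {a // p a} :=
  Set.ncard_sdiff_singleton_add_one (s := {a | p a}) h0

namespace Cl2

variable {R : Type*} [Ring R]

abbrev NonzeroIdem (R : Type*) [Ring R] := {e : R // e ^ 2 = e ∧ e ≠ 0}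

def orthogonals (e : R) : Set (NonzeroIdem R) := {f | e * f.1 = 0 ∧ f.1 * e = 0}

theorem not_mem_orthogonals_self (e : NonzeroIdem R) : e ∉ orthogonals e.1 := by
  rintro ⟨h, -⟩
  exact e.2.2 (by rwa [← e.2.1, sq])

theorem neighborSet_eq (e : NonzeroIdem R) (u : Rˣ) :
    (Cl2 R).neighborSet (e, u) = (orthogonals e.1 ×ˢ univ ∪ univ ×ˢ {u⁻¹}) \ {(e, u)} := by
  ext y
  simp only [SimpleGraph.mem_neighborSet, Cl2, orthogonals, mem_sdiff, mem_union, mem_prod,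
    mem_ofPred_eq, mem_univ, mem_singleton_iff, and_true, true_and]
  have hinv : u * y.2 = 1 ∧ y.2 * u = 1 ↔ y.2 = u⁻¹ :=
    ⟨fun h ↦ (mul_eq_one_iff_inv_eq.1 h.1).symm, by rintro h; simp [h]⟩
  rw [hinv, ne_comm, and_comm]

theorem mem_orthogonals_prod_univ_union_iff (e : NonzeroIdem R) (u : Rˣ) :
    (e, u) ∈ orthogonals e.1 ×ˢ univ ∪ univ ×ˢ {u⁻¹} ↔ u ^ 2 = 1 := by
  simp [not_mem_orthogonals_self, sq, eq_inv_iff_mul_eq_one]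

end Cl2

theorem stmt_13 {R : Type*} [Ring R] [Fintype R]
    (x : {e : R // e ^ 2 = e ∧ e ≠ 0} × Rˣ) :
    (x.2 ^ 2 = 1 →
      Nat.card {y // (Cl2 R).Adj x y} =
        Nat.card {e : R // e ^ 2 = e} +
          Nat.card {f : R // (f ^ 2 = f ∧ f ≠ 0) ∧ x.1.1 * f = 0 ∧ f * x.1.1 = 0} *
            (Nat.card Rˣ - 1) - 2) ∧
    (x.2 ^ 2 ≠ 1 →
      Nat.card {y // (Cl2 R).Adj x y} =
        Nat.card {e : R // e ^ 2 = e} +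
          Nat.card {f : R // (f ^ 2 = f ∧ f ≠ 0) ∧ x.1.1 * f = 0 ∧ f * x.1.1 = 0} *
            (Nat.card Rˣ - 1) - 1) := by
  obtain ⟨e, u⟩ := x
  dsimp only
  have hdeg : Nat.card {y // (Cl2 R).Adj (e, u) y} =
      ((Cl2.orthogonals e.1 ×ˢ univ ∪ univ ×ˢ {u⁻¹}) \ {(e, u)}).ncard := by
    rw [← Cl2.neighborSet_eq]
    exact Nat.card_coe_set_eq _
  have hO : Nat.card {f : R // (f ^ 2 = f ∧ f ≠ 0) ∧ e.1 * f = 0 ∧ f * e.1 = 0} =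
      (Cl2.orthogonals e.1).ncard := by
    rw [← Nat.card_coe_set_eq]
    exact Nat.card_congr (Equiv.subtypeSubtypeEquivSubtypeInter _ _).symm
  have hunion := ncard_prod_univ_union_univ_prod_singleton_add (Cl2.orthogonals e.1) u⁻¹
  have hidem : Nat.card (Cl2.NonzeroIdem R) + 1 = Nat.card {e : R // e ^ 2 = e} :=
    Nat.card_subtype_and_ne_zero_add_one (by simp)
  have hunits : ∀ n : ℕ, n * Nat.card Rˣ = n * (Nat.card Rˣ - 1) + n := fun n ↦ by
    rw [← mul_add_one, Nat.sub_one_add_one Nat.card_pos.ne']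
  rw [hunits] at hunion
  rw [hdeg, hO]
  constructor
  · intro hu
    have := ncard_sdiff_singleton_add_one ((Cl2.mem_orthogonals_prod_univ_union_iff e u).2 hu)
    omega
  · intro hu
    rw [sdiff_singleton_eq_self (mt (Cl2.mem_orthogonals_prod_univ_union_iff e u).1 hu)]
    omega
end

section
/- Let G be a simple graph with at least one vertex, and let t, n be positive integers with 2 ≤ t ≤ n and n − t even. The (t,n)-shuriken graph Shu^t_n(G) is disconnected if and only if G has no edges. -/
/-- The `(t,n)`-shuriken graph of `G` (with `1`-indexed copies `1,…,n` of the
paper encoded as `Fin n`, `0`-indexed). A new vertex `z` (encoded `none`) is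
added to `G`, and `n` copies are taken. Edges: copies of edges of `G` across
all pairs of copies; all edges within copy `i` for `i ≤ t`; and all edges
between copies `i` and `n + t + 1 - i` for `t + 1 ≤ i ≤ (n + t)/2`. -/
def Shu (t n : ℕ) {V : Type*} (G : SimpleGraph V) :
    SimpleGraph (Fin n × Option V) where
  Adj x y :=
    (∃ u v, x.2 = some u ∧ y.2 = some v ∧ G.Adj u v) ∨
    (x.1 = y.1 ∧ x.1.val < t ∧ x.2 ≠ y.2) ∨
    (x.1 ≠ y.1 ∧ x.1.val + y.1.val = n + t - 1 ∧ t ≤ x.1.val ∧ t ≤ y.1.val)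
  symm := by
    constructor
    rintro x y (⟨u, v, h1, h2, h3⟩ | ⟨h1, h2, h3⟩ | ⟨h1, h2, h3, h4⟩)
    · exact Or.inl ⟨v, u, h2, h1, h3.symm⟩
    · exact Or.inr (Or.inl ⟨h1.symm, h1 ▸ h2, h3.symm⟩)
    · exact Or.inr (Or.inr ⟨h1.symm, by omega, h4, h3⟩)
  loopless := by
    constructor
    rintro x (⟨u, v, h1, h2, h3⟩ | ⟨h1, h2, h3⟩ | ⟨h1, h2, h3⟩)
    · rw [h1] at h2
      injection h2 with h
      exact G.irrefl (h ▸ h3)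
    · exact h3 rfl
    · exact h1 rfl

/-!
If `G` has an edge `uv`, then every vertex of `Shu^t_n(G)` reaches a copy of `u`: inside its own
copy when that copy is complete, otherwise through the partner copy `n + t - 1 - i` (which differs
from copy `i` because `n + t` is even). All copies of `u` are adjacent to a copy of `v`, so the
graph is connected. If `G` has no edges, a complete copy (such as copy `0`, as `t > 0`) is joined
to nothing outside it, so it cannot reach copy `1`.
-/

namespace Shu

variable {V : Type*} {G : SimpleGraph V} {t n : ℕ}

lemma adj_some_some_of_adj {u v : V} (h : G.Adj u v) (i j : Fin n) :
    (Shu t n G).Adj (i, some u) (j, some v) :=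
  Or.inl ⟨u, v, rfl, rfl, h⟩

lemma exists_reachable_some (heven : Even (n - t)) (x : Fin n × Option V) (u : V) :
    ∃ j : Fin n, (Shu t n G).Reachable x (j, some u) := by
  obtain ⟨i, o⟩ := x
  by_cases hi : i.val < t
  · refine ⟨i, ?_⟩
    rcases eq_or_ne o (some u) with rfl | hne
    · rfl
    · exact SimpleGraph.Adj.reachable (Or.inr (Or.inl ⟨rfl, hi, hne⟩))
  · obtain ⟨k, hk⟩ := heven
    have hin := i.isLt
    refine ⟨⟨n + t - 1 - i.val, by omega⟩, SimpleGraph.Adj.reachable (Or.inr (Or.inr ?_))⟩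
    refine ⟨Fin.ne_of_val_ne ?_, ?_, ?_, ?_⟩ <;> dsimp only <;> omega

theorem connected_of_adj (hn : 0 < n) (heven : Even (n - t)) {u v : V} (huv : G.Adj u v) :
    (Shu t n G).Connected := by
  refine (SimpleGraph.connected_iff_exists_forall_reachable _).2 ⟨(⟨0, hn⟩, some v), fun x => ?_⟩
  obtain ⟨j, hj⟩ := exists_reachable_some heven x u
  exact (hj.trans (adj_some_some_of_adj huv j ⟨0, hn⟩).reachable).symm

lemma fst_eq_of_adj (hG : ∀ u v, ¬ G.Adj u v) {x y : Fin n × Option V} (hx : x.1.val < t)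
    (h : (Shu t n G).Adj x y) : y.1 = x.1 := by
  rcases h with ⟨u, v, -, -, huv⟩ | ⟨hxy, -, -⟩ | ⟨-, -, htx, -⟩
  · exact absurd huv (hG u v)
  · exact hxy.symm
  · omega

lemma fst_eq_of_reachable (hG : ∀ u v, ¬ G.Adj u v) {x y : Fin n × Option V} (hx : x.1.val < t)
    (h : (Shu t n G).Reachable x y) : y.1 = x.1 := by
  rw [SimpleGraph.reachable_iff_reflTransGen] at h
  induction h with
  | refl => rfl
  | tail _ hyz ih => exact (fst_eq_of_adj hG (ih ▸ hx) hyz).trans ih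

theorem not_connected_of_forall_not_adj (ht : 0 < t) (hn : 1 < n) (hG : ∀ u v, ¬ G.Adj u v) :
    ¬ (Shu t n G).Connected := fun hconn => by
  have h := fst_eq_of_reachable hG (x := (⟨0, by omega⟩, none)) (y := (⟨1, hn⟩, none)) ht
    (hconn.preconnected _ _)
  simp at h

end Shu

theorem stmt_16_general {V : Type*} (G : SimpleGraph V)
    (t n : ℕ) (ht : 2 ≤ t) (htn : t ≤ n) (heven : Even (n - t)) :
    ¬ (Shu t n G).Connected ↔ ∀ u v, ¬ G.Adj u v := by
  constructor
  · intro hdisc u v huv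
    exact hdisc (Shu.connected_of_adj (by omega) heven huv)
  · exact Shu.not_connected_of_forall_not_adj (by omega) (by omega)

theorem stmt_16 {V : Type*} (G : SimpleGraph V) (hV : Nonempty V)
    (t n : ℕ) (ht : 2 ≤ t) (htn : t ≤ n) (heven : Even (n - t)) :
    ¬ (Shu t n G).Connected ↔ ∀ u v, ¬ G.Adj u v :=
  stmt_16_general G t n ht htn heven
end
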